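/- Let q ≥ 2, x ≥ 1, and m ≥ 2 be integers. Over all pairs of admissible words c, d of length m, each different from the all-zero word and from the all-(q−1) word, with bridge b defined by the bridging rule, the maximum length of a run of equal consecutive symbols in the concatenation c·b·d equals 2(m−1)+x; that is, every such run has length at most 2(m−1)+x, and there exists such a pair c, d for which c·b·d contains a run of exactly 2(m−1)+x equal symbols. -/
import Mathlib


/-- A word `w` of length `m` over the alphabet `{0, ..., q-1}` (with `w ⟨m-1,_⟩` the
leftmost/most significant symbol) is admissible for the `Q^q_x` constraint if it contains
no forbidden pattern `(q-1) δ^r (q-1)` with `1 ≤ r ≤ x` and each symbol of `δ^r` at most `q-2`. -/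
def IsAdmissible (q x m : ℕ) (w : Fin m → Fin q) : Prop :=
  ∀ (i r : ℕ) (_hr1 : 1 ≤ r) (_hr2 : r ≤ x) (h : i + r + 1 < m),
    ¬((w ⟨i + r + 1, h⟩ : ℕ) = q - 1 ∧
      (w ⟨i, by omega⟩ : ℕ) = q - 1 ∧
      ∀ (j : ℕ) (_hj1 : 1 ≤ j) (_hj2 : j ≤ r), (w ⟨i + j, by omega⟩ : ℕ) ≤ q - 2)

/-- `Nadm q x m` is the number of admissible words of length `m`. -/
noncomputable def Nadm (q x m : ℕ) : ℕ :=
  Nat.card {w : Fin m → Fin q // IsAdmissible q x m w}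

/-- Lexicographic comparison of words of equal length: `w < w'` iff at the highest
index where they differ `w` has the smaller symbol. -/
def LexLt {q m : ℕ} (w w' : Fin m → Fin q) : Prop :=
  ∃ i : Fin m, w i < w' i ∧ ∀ j : Fin m, i < j → w j = w' j

/-- The lexicographic rank of a word among admissible words of its length. -/
noncomputable def rankOf (q x m : ℕ) (w : Fin m → Fin q) : ℕ :=
  Nat.card {v : Fin m → Fin q // IsAdmissible q x m v ∧ LexLt v w}

/-- The concatenation `c·b·d` of two length-`m` codewords around the length-`x` bridge `b`
prescribed by the bridging rule: all bridge symbols equal `q-1` if both the rightmost symbol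
of `c` and the leftmost symbol of `d` equal `q-1`, and all equal `0` otherwise.  The word `c`
is written first (it occupies the most significant positions). -/
def concatBridge (q x m : ℕ) (hq : 0 < q) (hm : 0 < m)
    (c d : Fin m → Fin q) : Fin (2 * m + x) → Fin q :=
  fun i =>
    if h1 : (i : ℕ) < m then d ⟨i, h1⟩
    else if (i : ℕ) < m + x then
      (if (c ⟨0, hm⟩ : ℕ) = q - 1 ∧ (d ⟨m - 1, by omega⟩ : ℕ) = q - 1
       then (⟨q - 1, by omega⟩ : Fin q) else (⟨0, hq⟩ : Fin q))
    else c ⟨(i : ℕ) - (m + x), by have := i.isLt; omega⟩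

/-- `w` contains `L` consecutive positions all carrying the same symbol. -/
def HasRun (q n : ℕ) (w : Fin n → Fin q) (L : ℕ) : Prop :=
  ∃ (s : ℕ) (h : s + L ≤ n) (v : Fin q),
    ∀ (j : ℕ) (_hj : j < L), w ⟨s + j, by omega⟩ = v

/-- over all pairs of admissible, non-constant-extreme codewords, the maximal
run length in the bridged concatenation `c·b·d` equals `2(m-1)+x`: every run is at most that
long, and some pair achieves it. -/
theorem stmt_12 (q x m : ℕ) (hq : 2 ≤ q) (hx : 1 ≤ x) (hm : 2 ≤ m) :
    (∀ c d : Fin m → Fin q,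
      IsAdmissible q x m c → IsAdmissible q x m d →
      c ≠ (fun _ => (⟨0, by omega⟩ : Fin q)) →
      c ≠ (fun _ => (⟨q - 1, by omega⟩ : Fin q)) →
      d ≠ (fun _ => (⟨0, by omega⟩ : Fin q)) →
      d ≠ (fun _ => (⟨q - 1, by omega⟩ : Fin q)) →
      ∀ L : ℕ, HasRun q (2 * m + x) (concatBridge q x m (by omega) (by omega) c d) L →
        L ≤ 2 * (m - 1) + x) ∧
    (∃ c d : Fin m → Fin q,
      IsAdmissible q x m c ∧ IsAdmissible q x m d ∧
      c ≠ (fun _ => (⟨0, by omega⟩ : Fin q)) ∧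
      c ≠ (fun _ => (⟨q - 1, by omega⟩ : Fin q)) ∧
      d ≠ (fun _ => (⟨0, by omega⟩ : Fin q)) ∧
      d ≠ (fun _ => (⟨q - 1, by omega⟩ : Fin q)) ∧
      HasRun q (2 * m + x) (concatBridge q x m (by omega) (by omega) c d)
        (2 * (m - 1) + x)) := by
  constructor
  · -- upper bound
    intro c d hc hd hc1 hc2 hd1 hd2 L hL
    by_contra hcon
    push_neg at hcon
    obtain ⟨s, h, v, hrun⟩ := hL
    set w : Fin (2 * m + x) → Fin q := concatBridge q x m (by omega) (by omega) c d with hw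
    have hs : s ≤ 1 := by omega
    have key : ∀ (a b : ℕ) (ha : a < 2 * m + x) (hb : b < 2 * m + x),
        a = b → w ⟨a, ha⟩ = v → w ⟨b, hb⟩ = v := by
      rintro a b ha hb rfl hv; exact hv
    have hdval : ∀ (p : ℕ) (hp : p < m), w ⟨p, by omega⟩ = d ⟨p, hp⟩ := by
      intro p hp
      simp only [hw, concatBridge]
      rw [dif_pos hp]
    have hcov : ∀ p, 1 ≤ p → p ≤ 2 * m + x - 2 → ∀ (hp : p < 2 * m + x), w ⟨p, hp⟩ = v := by
      intro p hp1 hp2 hp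
      exact key (s + (p - s)) p (by omega) hp (by omega) (hrun (p - s) (by omega))
    have hcval : ∀ (p : ℕ) (hp1 : m + x ≤ p) (hp2 : p < 2 * m + x),
        w ⟨p, hp2⟩ = c ⟨p - (m + x), by omega⟩ := by
      intro p hp1 hp2
      simp only [hw, concatBridge]
      rw [dif_neg (by simp; omega), if_neg (by simp; omega)]
    have hbval : w ⟨m, by omega⟩ =
        (if (c ⟨0, by omega⟩ : ℕ) = q - 1 ∧ (d ⟨m - 1, by omega⟩ : ℕ) = q - 1
         then (⟨q - 1, by omega⟩ : Fin q) else (⟨0, by omega⟩ : Fin q)) := by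
      simp only [hw, concatBridge]
      rw [dif_neg (by simp), if_pos (by simp; omega)]
    have keyd : ∀ (a : Fin m) (b : ℕ) (hb : b < m), (a : ℕ) = b → d ⟨b, hb⟩ = v → d a = v := by
      rintro ⟨a, ha⟩ b hb rfl hv; exact hv
    have keyc : ∀ (a : Fin m) (b : ℕ) (hb : b < m), (a : ℕ) = b → c ⟨b, hb⟩ = v → c a = v := by
      rintro ⟨a, ha⟩ b hb rfl hv; exact hv
    have hdv : ∀ i : Fin m, 1 ≤ (i : ℕ) → d i = v := by
      intro i hi
      have h1 := hcov (i : ℕ) hi (by have := i.isLt; omega) (by have := i.isLt; omega)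
      rw [hdval (i : ℕ) i.isLt] at h1
      exact keyd i (i : ℕ) i.isLt rfl h1
    have hcv : ∀ i : Fin m, (i : ℕ) ≤ m - 2 → c i = v := by
      intro i hi
      have h1 := hcov (m + x + (i : ℕ)) (by omega) (by omega) (by omega)
      rw [hcval (m + x + (i : ℕ)) (by omega) (by omega)] at h1
      exact keyc i (m + x + (i : ℕ) - (m + x)) (by omega) (by omega) h1
    have hbv := hcov m (by omega) (by omega) (by omega)
    rw [hbval] at hbv
    have hconst : d = (fun _ => v) ∨ c = (fun _ => v) := by
      rcases (by omega : s = 0 ∨ s = 1) with hs0 | hs1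
      · left
        funext i
        rcases Nat.eq_zero_or_pos (i : ℕ) with hi | hi
        · have h0' : w ⟨0, by omega⟩ = v :=
            key (s + 0) 0 (by omega) (by omega) (by omega) (hrun 0 (by omega))
          rw [hdval 0 (by omega)] at h0'
          exact keyd i 0 (by omega) hi h0'
        · exact hdv i hi
      · right
        funext i
        rcases (by have := i.isLt; omega : (i : ℕ) ≤ m - 2 ∨ (i : ℕ) = m - 1) with hi | hi
        · exact hcv i hi
        · have hlast : w ⟨2 * m + x - 1, by omega⟩ = v :=
            key (s + (2 * m + x - 2)) (2 * m + x - 1) (by omega) (by omega) (by omega)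
              (hrun (2 * m + x - 2) (by omega))
          rw [hcval (2 * m + x - 1) (by omega) (by omega)] at hlast
          exact keyc i (2 * m + x - 1 - (m + x)) (by omega) (by omega) hlast
    by_cases hbr : (c ⟨0, by omega⟩ : ℕ) = q - 1 ∧ (d ⟨m - 1, by omega⟩ : ℕ) = q - 1
    · rw [if_pos hbr] at hbv
      rcases hconst with hD | hC
      · exact hd2 (by rw [hD, ← hbv])
      · exact hc2 (by rw [hC, ← hbv])
    · rw [if_neg hbr] at hbv
      rcases hconst with hD | hC
      · exact hd1 (by rw [hD, ← hbv])
      · exact hc1 (by rw [hC, ← hbv])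
  · -- existence
    set c0 : Fin m → Fin q :=
      fun i => if (i : ℕ) = m - 1 then ⟨1, by omega⟩ else ⟨0, by omega⟩ with hc0
    set d0 : Fin m → Fin q :=
      fun i => if (i : ℕ) = 0 then ⟨1, by omega⟩ else ⟨0, by omega⟩ with hd0
    have hc0v : ∀ i : Fin m, (c0 i : ℕ) = if (i : ℕ) = m - 1 then 1 else 0 := by
      intro i; rw [hc0]; dsimp only; split_ifs <;> rfl
    have hd0v : ∀ i : Fin m, (d0 i : ℕ) = if (i : ℕ) = 0 then 1 else 0 := by
      intro i; rw [hd0]; dsimp only; split_ifs <;> rfl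
    refine ⟨c0, d0, ?_, ?_, ?_, ?_, ?_, ?_, ?_⟩
    · intro i r hr1 hr2 h
      rintro ⟨h1, h2, -⟩
      rw [hc0v] at h1 h2
      rw [Fin.val_mk] at h1 h2
      split_ifs at h1 h2 <;> first | assumption | omega
    · intro i r hr1 hr2 h
      rintro ⟨h1, h2, -⟩
      rw [hd0v] at h1 h2
      rw [Fin.val_mk] at h1 h2
      split_ifs at h1 h2 <;> first | assumption | omega
    · intro hcontra
      have h := congrArg Fin.val (congrFun hcontra ⟨m - 1, by omega⟩)
      rw [hc0v, Fin.val_mk, if_pos rfl] at h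
      first | omega | (rw [Fin.val_mk] at h; omega)
    · intro hcontra
      have h := congrArg Fin.val (congrFun hcontra ⟨0, by omega⟩)
      rw [hc0v, Fin.val_mk, if_neg (by omega)] at h
      first | omega | (rw [Fin.val_mk] at h; omega)
    · intro hcontra
      have h := congrArg Fin.val (congrFun hcontra ⟨0, by omega⟩)
      rw [hd0v, Fin.val_mk, if_pos rfl] at h
      first | omega | (rw [Fin.val_mk] at h; omega)
    · intro hcontra
      have h := congrArg Fin.val (congrFun hcontra ⟨m - 1, by omega⟩)
      rw [hd0v, Fin.val_mk, if_neg (by omega)] at h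
      first | omega | (rw [Fin.val_mk] at h; omega)
    · refine ⟨1, by omega, ⟨0, by omega⟩, ?_⟩
      intro j hj
      apply Fin.ext
      rw [Fin.val_mk]
      show (concatBridge q x m (by omega) (by omega) c0 d0 ⟨1 + j, by omega⟩ : ℕ) = 0
      have hjlt : 1 + j < 2 * m + x := by omega
      simp only [concatBridge, Fin.val_mk]
      by_cases h1 : 1 + j < m
      · rw [dif_pos h1, hd0v, Fin.val_mk, if_neg (by omega)]
      · rw [dif_neg h1]
        by_cases h2 : 1 + j < m + x
        · rw [if_pos h2, if_neg ?_, Fin.val_mk]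
          rintro ⟨hcc, -⟩
          rw [hc0v, Fin.val_mk, if_neg (by omega)] at hcc
          omega
        · rw [if_neg h2, hc0v, Fin.val_mk, if_neg (by omega)]
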